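/- Let m₂ ∈ (0, 1), set m₁ = m₃ = (1 − m₂)/2, and let y > 0 satisfy the mass-constraint equation (1 − m₂)/(y² + 1)^{3/2} + m₂/y³ = (1 + 7m₂)/8. Put a₁ = (−(1 − m₂)^{−1/2}, 0), a₂ = (0, 0), a₃ = ((1 − m₂)^{−1/2}, 0), a₄ = (0, y·(1 − m₂)^{−1/2}) in ℝ². Define μ = ∑_{j=1}^{3} mⱼ/|aⱼ − a₄|³ and D = (3/μ)·∑_{j=1}^{3} mⱼ (aⱼ − a₄)(aⱼ − a₄)ᵀ/|aⱼ − a₄|⁵. Then D = 3·[[z, 0], [0, 1 − z]] with z = 8(1 − m₂)/((1 + 7m₂)(y² + 1)^{5/2}). -/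

import Mathlib

/-- The outer product `v vᵀ` of a vector `v ∈ ℝ²` with itself, as a 2×2 matrix. -/
noncomputable def outer (v : EuclideanSpace ℝ (Fin 2)) : Matrix (Fin 2) (Fin 2) ℝ :=
  Matrix.of fun p q => v p * v q

/-- The point of `ℝ²` with coordinates `(x, y)`. -/
noncomputable def vec2 (x y : ℝ) : EuclideanSpace ℝ (Fin 2) :=
  (WithLp.equiv 2 (Fin 2 → ℝ)).symm ![x, y]

/-!
The matrix `D` is homogeneous of degree `0` in the offsets `aⱼ - a₄`, so the common factor
`(1 - m₂)^{-1/2}` drops out and one may work with the offsets `(∓1, -y)`, `(0, -y)`. For these,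
the mass constraint says exactly that `μ = (1 + 7m₂)/8`; the off-diagonal entries cancel because
`m₁ = m₃`, and the `(0,0)` entry is `3z` by a direct computation. Since `tr (v vᵀ) = |v|²`, the
trace of `D` is always `3`, which gives the last entry `3(1 - z)`.
-/

lemma vec2_sub (a b c d : ℝ) : vec2 a b - vec2 c d = vec2 (a - c) (b - d) := by
  ext i; fin_cases i <;> rfl

lemma smul_vec2 (c x y : ℝ) : c • vec2 x y = vec2 (c * x) (c * y) := by
  ext i; fin_cases i <;> rfl

lemma norm_vec2 (x y : ℝ) : ‖vec2 x y‖ = √(x ^ 2 + y ^ 2) := by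
  simp [EuclideanSpace.norm_eq, Fin.sum_univ_two, vec2]

lemma norm_vec2_pow (x y : ℝ) (n : ℕ) : ‖vec2 x y‖ ^ n = (x ^ 2 + y ^ 2) ^ ((n : ℝ) / 2) := by
  rw [norm_vec2, Real.sqrt_eq_rpow, ← Real.rpow_natCast, ← Real.rpow_mul (by positivity)]
  ring_nf

lemma outer_vec2 (x y : ℝ) : outer (vec2 x y) = !![x * x, x * y; y * x, y * y] := by
  ext p r; fin_cases p <;> fin_cases r <;> rfl

lemma outer_smul (c : ℝ) (v : EuclideanSpace ℝ (Fin 2)) : outer (c • v) = c ^ 2 • outer v := by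
  ext p r; simp only [outer, Matrix.of_apply, Matrix.smul_apply, PiLp.smul_apply, smul_eq_mul]; ring

lemma trace_outer (v : EuclideanSpace ℝ (Fin 2)) : (outer v).trace = ‖v‖ ^ 2 := by
  rw [EuclideanSpace.norm_sq_eq, Fin.sum_univ_two, Matrix.trace_fin_two]
  simp [outer, sq]

section CentralConfigMatrix

variable {ι : Type*} [Fintype ι]

noncomputable def centralConfigMatrix (m : ι → ℝ) (v : ι → EuclideanSpace ℝ (Fin 2)) :
    Matrix (Fin 2) (Fin 2) ℝ :=
  (3 / ∑ j, m j / ‖v j‖ ^ 3) • ∑ j, (m j / ‖v j‖ ^ 5) • outer (v j)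

lemma centralConfigMatrix_smul (m : ι → ℝ) (v : ι → EuclideanSpace ℝ (Fin 2)) {c : ℝ}
    (hc : c ≠ 0) : centralConfigMatrix m (fun j ↦ c • v j) = centralConfigMatrix m v := by
  have hk : |c| ^ 3 ≠ 0 := by positivity
  have hweight : ∑ j, m j / ‖c • v j‖ ^ 3 = (|c| ^ 3)⁻¹ * ∑ j, m j / ‖v j‖ ^ 3 := by
    rw [Finset.mul_sum]
    refine Finset.sum_congr rfl fun j _ ↦ ?_
    rw [norm_smul, Real.norm_eq_abs]
    ring
  have hsum : ∑ j, (m j / ‖c • v j‖ ^ 5) • outer (c • v j) =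
      (|c| ^ 3)⁻¹ • ∑ j, (m j / ‖v j‖ ^ 5) • outer (v j) := by
    rw [Finset.smul_sum]
    refine Finset.sum_congr rfl fun j _ ↦ ?_
    rw [outer_smul, smul_smul, smul_smul, norm_smul, Real.norm_eq_abs, ← sq_abs c]
    congr 1
    field_simp
  unfold centralConfigMatrix
  rw [hweight, hsum, smul_smul]
  congr 1
  field_simp

lemma trace_centralConfigMatrix (m : ι → ℝ) (v : ι → EuclideanSpace ℝ (Fin 2))
    (h : ∑ j, m j / ‖v j‖ ^ 3 ≠ 0) : (centralConfigMatrix m v).trace = 3 := by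
  have hterm (j : ι) : m j / ‖v j‖ ^ 5 * ‖v j‖ ^ 2 = m j / ‖v j‖ ^ 3 := by
    rcases eq_or_ne ‖v j‖ 0 with h0 | h0
    · simp [h0]
    · field_simp
  simp only [centralConfigMatrix, Matrix.trace_smul, Matrix.trace_sum, trace_outer, smul_eq_mul,
    hterm]
  field_simp

end CentralConfigMatrix

noncomputable def primaryOffsets (y : ℝ) : Fin 3 → EuclideanSpace ℝ (Fin 2) :=
  ![vec2 (-1) (-y), vec2 0 (-y), vec2 1 (-y)]

section PrimaryOffsets

variable (m : Fin 3 → ℝ) {y : ℝ}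

lemma norm_primaryOffsets_zero_pow (n : ℕ) :
    ‖primaryOffsets y 0‖ ^ n = (y ^ 2 + 1) ^ ((n : ℝ) / 2) := by
  simp only [primaryOffsets, Matrix.cons_val_zero, norm_vec2_pow]
  ring_nf

lemma norm_primaryOffsets_two_pow (n : ℕ) :
    ‖primaryOffsets y 2‖ ^ n = (y ^ 2 + 1) ^ ((n : ℝ) / 2) := by
  simp only [primaryOffsets, Matrix.cons_val_two, Matrix.tail_cons, Matrix.head_cons,
    norm_vec2_pow]
  ring_nf

lemma norm_primaryOffsets_one (hy : 0 ≤ y) : ‖primaryOffsets y 1‖ = y := by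
  simp [primaryOffsets, norm_vec2, hy]

lemma sum_div_norm_primaryOffsets_pow_three (hy : 0 ≤ y) :
    ∑ j, m j / ‖primaryOffsets y j‖ ^ 3 =
      (m 0 + m 2) / (y ^ 2 + 1) ^ ((3 : ℝ) / 2) + m 1 / y ^ 3 := by
  rw [Fin.sum_univ_three, norm_primaryOffsets_zero_pow, norm_primaryOffsets_two_pow,
    norm_primaryOffsets_one hy]
  push_cast
  ring

lemma sum_outer_primaryOffsets_apply_zero_zero :
    (∑ j, (m j / ‖primaryOffsets y j‖ ^ 5) • outer (primaryOffsets y j)) 0 0 =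
      (m 0 + m 2) / (y ^ 2 + 1) ^ ((5 : ℝ) / 2) := by
  simp only [Matrix.sum_apply, Fin.sum_univ_three, Matrix.smul_apply, norm_primaryOffsets_zero_pow,
    norm_primaryOffsets_two_pow]
  simp [primaryOffsets, outer_vec2]
  ring

lemma sum_outer_primaryOffsets_apply_zero_one :
    (∑ j, (m j / ‖primaryOffsets y j‖ ^ 5) • outer (primaryOffsets y j)) 0 1 =
      (m 0 - m 2) * y / (y ^ 2 + 1) ^ ((5 : ℝ) / 2) := by
  simp only [Matrix.sum_apply, Fin.sum_univ_three, Matrix.smul_apply, norm_primaryOffsets_zero_pow,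
    norm_primaryOffsets_two_pow]
  simp [primaryOffsets, outer_vec2]
  ring

lemma sum_outer_primaryOffsets_apply_one_zero :
    (∑ j, (m j / ‖primaryOffsets y j‖ ^ 5) • outer (primaryOffsets y j)) 1 0 =
      (m 0 - m 2) * y / (y ^ 2 + 1) ^ ((5 : ℝ) / 2) := by
  simp only [Matrix.sum_apply, Fin.sum_univ_three, Matrix.smul_apply, norm_primaryOffsets_zero_pow,
    norm_primaryOffsets_two_pow]
  simp [primaryOffsets, outer_vec2]
  ring

end PrimaryOffsets

/-- in the symmetric restricted four-body problem with primaries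
`a₁ = (−(1−m₂)^{−1/2}, 0)`, `a₂ = (0,0)`, `a₃ = ((1−m₂)^{−1/2}, 0)` of masses
`(1−m₂)/2, m₂, (1−m₂)/2` and massless body at `a₄ = (0, y(1−m₂)^{−1/2})`, with
`μ = ∑ mⱼ/|aⱼ − a₄|³` and `D = (3/μ)∑ mⱼ (aⱼ − a₄)(aⱼ − a₄)ᵀ/|aⱼ − a₄|⁵`, one has
`D = 3·[[z, 0], [0, 1 − z]]` where `z = 8(1 − m₂)/((1 + 7m₂)(y² + 1)^{5/2})`. -/
theorem statement12 (m₂ : ℝ) (hm : m₂ ∈ Set.Ioo (0 : ℝ) 1)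
    (y : ℝ) (hy : 0 < y)
    (heq : (1 - m₂) / (y ^ 2 + 1) ^ ((3 : ℝ) / 2) + m₂ / y ^ 3 = (1 + 7 * m₂) / 8)
    (m : Fin 3 → ℝ)
    (hm1 : m 0 = (1 - m₂) / 2) (hm2 : m 1 = m₂) (hm3 : m 2 = (1 - m₂) / 2)
    (a : Fin 3 → EuclideanSpace ℝ (Fin 2)) (a₄ : EuclideanSpace ℝ (Fin 2))
    (ha1 : a 0 = vec2 (-((1 - m₂) ^ (-(1 : ℝ) / 2))) 0)
    (ha2 : a 1 = vec2 0 0)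
    (ha3 : a 2 = vec2 ((1 - m₂) ^ (-(1 : ℝ) / 2)) 0)
    (ha4 : a₄ = vec2 0 (y * (1 - m₂) ^ (-(1 : ℝ) / 2)))
    (μ : ℝ) (hμ : μ = ∑ j, m j / ‖a j - a₄‖ ^ 3)
    (D : Matrix (Fin 2) (Fin 2) ℝ)
    (hD : D = (3 / μ) • ∑ j, (m j / ‖a j - a₄‖ ^ 5) • outer (a j - a₄))
    (z : ℝ) (hz : z = 8 * (1 - m₂) / ((1 + 7 * m₂) * (y ^ 2 + 1) ^ ((5 : ℝ) / 2))) :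
    D = (3 : ℝ) • !![z, 0; 0, 1 - z] := by
  obtain ⟨hm₂_pos, hm₂_lt_one⟩ := hm
  set s := (1 - m₂) ^ (-(1 : ℝ) / 2)
  have hs : s ≠ 0 := (Real.rpow_pos_of_pos (by linarith) _).ne'
  have hoffsets : (fun j ↦ a j - a₄) = fun j ↦ s • primaryOffsets y j := by
    funext j
    fin_cases j <;> simp [ha1, ha2, ha3, ha4, primaryOffsets, vec2_sub, smul_vec2, mul_comm]
  have hD' : D = centralConfigMatrix m (primaryOffsets y) := by
    rw [← centralConfigMatrix_smul m (primaryOffsets y) hs, ← hoffsets, hD, hμ]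
    rfl
  have hweight : ∑ j, m j / ‖primaryOffsets y j‖ ^ 3 = (1 + 7 * m₂) / 8 := by
    rw [sum_div_norm_primaryOffsets_pow_three m hy.le, hm1, hm2, hm3, ← heq]
    ring
  have h00 : D 0 0 = 3 * z := by
    rw [hD', centralConfigMatrix, Matrix.smul_apply, hweight,
      sum_outer_primaryOffsets_apply_zero_zero, hm1, hm3, hz, smul_eq_mul]
    field_simp
    ring
  have h01 : D 0 1 = 0 := by
    rw [hD', centralConfigMatrix, Matrix.smul_apply, sum_outer_primaryOffsets_apply_zero_one,
      hm1, hm3]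
    simp
  have h10 : D 1 0 = 0 := by
    rw [hD', centralConfigMatrix, Matrix.smul_apply, sum_outer_primaryOffsets_apply_one_zero,
      hm1, hm3]
    simp
  have htrace : D 0 0 + D 1 1 = 3 := by
    rw [← Matrix.trace_fin_two, hD']
    exact trace_centralConfigMatrix m _ (by rw [hweight]; positivity)
  ext i k
  fin_cases i <;> fin_cases k <;> simp [h00, h01, h10]
  linarith
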